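/- For an irrational real θ, define S_{-θ} to be the set of positive integers q such that ⌈q(−θ)⌉/q < ⌈q′(−θ)⌉/q′ for all integers q′ with 1 ≤ q′ ≤ q − 1. Then for every q ∈ S_{-θ}, gcd(q, ⌊qθ⌋) = 1. -/

import Mathlib

/-!
Since `⌈-qθ⌉ = -⌊qθ⌋`, membership in `S_{-θ}` says that `⌊qθ⌋ / q` strictly exceeds `⌊kθ⌋ / k`
for every `k < q`. If `d = gcd(q, ⌊qθ⌋) > 1`, then `k = q / d` has `⌊kθ⌋ = ⌊qθ⌋ / d`
(as `⌊y⌋ = ⌊d y⌋ / d`), so `⌊kθ⌋ / k = ⌊qθ⌋ / q`, a contradiction.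
-/

theorem Int.floor_eq_of_floor_mul_eq {α : Type*} [Field α] [LinearOrder α] [IsStrictOrderedRing α]
    [FloorRing α] {d : ℕ} (hd : d ≠ 0) {y : α} {m : ℤ} (h : ⌊(d : α) * y⌋ = d * m) :
    ⌊y⌋ = m := by
  have hd' : (d : α) ≠ 0 := Nat.cast_ne_zero.mpr hd
  rw [← mul_div_cancel_left₀ y hd', Int.floor_div_natCast, h,
    Int.mul_ediv_cancel_left _ (Int.natCast_ne_zero.mpr hd)]

theorem exists_lt_floor_div_eq_of_one_lt_gcd {α : Type*} [Field α] [LinearOrder α]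
    [IsStrictOrderedRing α] [FloorRing α] (x : α) {q : ℕ}
    (hgcd : 1 < Int.gcd (q : ℤ) ⌊(q : α) * x⌋) :
    ∃ k : ℕ, 0 < k ∧ k < q ∧ (⌊(k : α) * x⌋ : α) / k = (⌊(q : α) * x⌋ : α) / q := by
  set d := Int.gcd (q : ℤ) ⌊(q : α) * x⌋
  obtain ⟨k, hk⟩ : d ∣ q := Int.natCast_dvd_natCast.mp (Int.gcd_dvd_left _ _)
  obtain ⟨m, hm⟩ : (d : ℤ) ∣ ⌊(q : α) * x⌋ := Int.gcd_dvd_right _ _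
  have hk0 : k ≠ 0 := by
    rintro rfl
    rw [mul_zero] at hk
    simp [d, hk] at hgcd
  have hfloor : ⌊(k : α) * x⌋ = m := by
    refine Int.floor_eq_of_floor_mul_eq (d := d) (by omega) ?_
    rw [← mul_assoc, ← Nat.cast_mul, ← hk, hm]
  refine ⟨k, Nat.pos_of_ne_zero hk0, ?_, ?_⟩
  · rw [hk]
    exact lt_mul_left (Nat.pos_of_ne_zero hk0) hgcd
  · have hd0 : (d : α) ≠ 0 := Nat.cast_ne_zero.mpr (by omega)
    rw [hfloor, hm, hk]
    push_cast
    rw [mul_div_mul_left _ _ hd0]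

theorem stmt9_general (θ : ℝ) (q : ℕ) (hq : 0 < q)
    (hmem : ∀ q' : ℕ, 1 ≤ q' → q' ≤ q - 1 →
      (⌈(q : ℝ) * (-θ)⌉ : ℝ) / q < (⌈(q' : ℝ) * (-θ)⌉ : ℝ) / q') :
    Int.gcd (q : ℤ) ⌊(q : ℝ) * θ⌋ = 1 := by
  by_contra hne
  have hgcd : 1 < Int.gcd (q : ℤ) ⌊(q : ℝ) * θ⌋ := by
    have : Int.gcd (q : ℤ) ⌊(q : ℝ) * θ⌋ ≠ 0 := by simp [Int.gcd_eq_zero_iff, hq.ne']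
    omega
  obtain ⟨k, hk0, hkq, hk⟩ := exists_lt_floor_div_eq_of_one_lt_gcd θ hgcd
  have hlt := hmem k hk0 (by omega)
  simp only [mul_neg, Int.ceil_neg, Int.cast_neg, neg_div, neg_lt_neg_iff, hk] at hlt
  exact lt_irrefl _ hlt

theorem stmt9 (θ : ℝ) (hθ : Irrational θ) (q : ℕ) (hq : 0 < q)
    (hmem : ∀ q' : ℕ, 1 ≤ q' → q' ≤ q - 1 →
      (⌈(q : ℝ) * (-θ)⌉ : ℝ) / q < (⌈(q' : ℝ) * (-θ)⌉ : ℝ) / q') :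
    Int.gcd (q : ℤ) ⌊(q : ℝ) * θ⌋ = 1 :=
  stmt9_general θ q hq hmem
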